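/- Let X be a compact metric space, α a homeomorphism, 𝒱 a line bundle, ℰ = Γ(𝒱,α), Y ⊆ X nonempty closed, and N ≥ 1. Suppose U ⊆ X is open with 𝒱|_{α^n(U)} trivial for 0 ≤ n ≤ N−1. If f ∈ C(X) is positive with support in U and f vanishes on ∪_{n=1}^{N} α^{-n}(Y), then f is Cuntz equivalent to f∘α^{-N} in the orbit-breaking algebra O(ℰ_Y): explicitly, there exist sections ξ_1,…,ξ_N ∈ ℰ with ξ_n*ξ_n·(f∘α^{-n+1}) = f∘α^{-n+1} and ξ_nξ_n*·(f∘α^{-n}) = f∘α^{-n}, and a = f^{1/2}ξ_1*⋯ξ_N* ∈ O(ℰ_Y) satisfies aa* = f and a*a = f∘α^{-N}. -/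

import Mathlib

/-!
STATEMENT 14. Let `X` be a compact metric space, `α` a homeomorphism, `𝒱` a Hermitian
line bundle, `ℰ = Γ(𝒱,α)`, `Y ⊆ X` nonempty closed, `N ≥ 1`, and `U ⊆ X` open with
`𝒱|_{αⁿ(U)}` trivial for `0 ≤ n ≤ N−1`.  If `f ∈ C(X)` is positive with support in `U`
and `f` vanishes on `∪_{n=1}^N α^{-n}(Y)`, then `f` is Cuntz equivalent to `f∘α^{-N}`
in the orbit-breaking algebra `O(ℰ_Y)`: explicitly, there exist sections `ξ_1, …, ξ_N`
with `ξ_n*ξ_n·(f∘α^{-(n-1)}) = f∘α^{-(n-1)}` and `ξ_nξ_n*·(f∘α^{-n}) = f∘α^{-n}`, and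
`a = f^{1/2} ξ_1* ⋯ ξ_N*` lies in `O(ℰ_Y)` and satisfies `aa* = f`, `a*a = f∘α^{-N}`.
Here `O(ℰ_Y)` is modelled inside a faithful covariant representation `(p, t)` of `ℰ` as
the closed *-subalgebra generated by `p(C(X))` and `t(ℰ_Y)`, where by Lemma 6.2 the
sections in `ℰ_Y = C₀(X∖Y)ℰ` are exactly those vanishing on `α⁻¹(Y)`.
-/

def Sect {X : Type*} [TopologicalSpace X] (V : X → Type*)
    [∀ x, NormedAddCommGroup (V x)] [TopologicalSpace (Bundle.TotalSpace ℂ V)] :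
    Type _ :=
  {s : ∀ x, V x // Continuous fun x => (Bundle.TotalSpace.mk x (s x) : Bundle.TotalSpace ℂ V)}

def TrivialOver {X : Type*} [TopologicalSpace X] (V : X → Type*)
    [∀ x, NormedAddCommGroup (V x)] [TopologicalSpace (Bundle.TotalSpace ℂ V)]
    (W : Set X) : Prop :=
  ∃ s : ∀ x, V x,
    ContinuousOn (fun x => (Bundle.TotalSpace.mk x (s x) : Bundle.TotalSpace ℂ V)) W ∧
    ∀ x ∈ W, ‖s x‖ = 1

noncomputable def toC {X : Type*} [TopologicalSpace X] (f : C(X, ℝ)) : C(X, ℂ) :=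
  ⟨fun x => (f x : ℂ), Complex.continuous_ofReal.comp f.continuous⟩

structure IsCovRep {X : Type*} [TopologicalSpace X] [CompactSpace X] (α : X ≃ₜ X)
    (V : X → Type*) [∀ x, NormedAddCommGroup (V x)] [∀ x, InnerProductSpace ℂ (V x)]
    [TopologicalSpace (Bundle.TotalSpace ℂ V)]
    (B : Type*) [NormedRing B] [StarRing B] [NormedAlgebra ℂ B]
    (p : C(X, ℂ) →⋆ₐ[ℂ] B) (t : Sect V → B) : Prop where
  injective : Function.Injective p
  map_add : ∀ ξ η ζ : Sect V, (∀ x, ζ.1 x = ξ.1 x + η.1 x) → t ζ = t ξ + t η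
  inner_right : ∀ (ξ η : Sect V) (g : C(X, ℂ)),
    (∀ x, (inner ℂ (ξ.1 x) (η.1 x) : ℂ) = g x) → star (t ξ) * t η = p g
  inner_left : ∀ (ξ η : Sect V) (g : C(X, ℂ)),
    (∀ x, (inner ℂ (η.1 (α.symm x)) (ξ.1 (α.symm x)) : ℂ) = g x) →
      t ξ * star (t η) = p g
  left_act : ∀ (f : C(X, ℂ)) (ξ η : Sect V),
    (∀ x, η.1 x = f (α x) • ξ.1 x) → t η = p f * t ξ
  right_act : ∀ (f : C(X, ℂ)) (ξ η : Sect V),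
    (∀ x, η.1 x = f x • ξ.1 x) → t η = t ξ * p f

/-- The orbit-breaking subalgebra `O(ℰ_Y) ⊆ O(ℰ)`: the closed *-subalgebra generated by
`C(X)` and the sections of `ℰ_Y = C₀(X∖Y)ℰ`, i.e. those vanishing on `α⁻¹(Y)`. -/
noncomputable def OBalg {X : Type*} [TopologicalSpace X] [CompactSpace X] (α : X ≃ₜ X)
    (V : X → Type*) [∀ x, NormedAddCommGroup (V x)] [∀ x, InnerProductSpace ℂ (V x)]
    [TopologicalSpace (Bundle.TotalSpace ℂ V)]
    (B : Type*) [NormedRing B] [StarRing B] [NormedAlgebra ℂ B] [StarModule ℂ B]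
    [ContinuousStar B]
    (p : C(X, ℂ) →⋆ₐ[ℂ] B) (t : Sect V → B) (Y : Set X) : StarSubalgebra ℂ B :=
  (StarAlgebra.adjoin ℂ
    (Set.range ⇑p ∪ t '' {ξ : Sect V | ∀ x, α x ∈ Y → ξ.1 x = 0})).topologicalClosure


/-!
Cutting down a unit section of `𝒱` over `α^{n-1}(U)` by a Urysohn function equal to `1` on
`α^{n-1}(supp f)` gives `ξ_n ∈ ℰ` with `|ξ_n| = 1` wherever `h = f ∘ α^{-(n-1)}` is nonzero. For
such `h` the relations `ξ*η = ⟨ξ, η⟩` and `ξη* = ⟨η, ξ⟩ ∘ α⁻¹` give `ξ_n* ξ_n h = h` and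
`ξ_n h ξ_n* = h ∘ α⁻¹`, while `h ξ* = ξ* (h ∘ α⁻¹)` for every `h`. Telescoping these through
`a = f^{1/2} ξ_1* ⋯ ξ_N*` gives `a*a = f ∘ α^{-N}` and `aa* = f`. For membership in `O(ℰ_Y)`
write `f^{1/2} = g^N` and move one factor of `g` next to each `ξ_n*`: then
`(g ∘ α^{-(n-1)}) ξ_n*` is the adjoint of a section vanishing on `α⁻¹(Y)`, because `f` vanishes
on `α^{-n}(Y)`.
-/

open Bundle

section Sections

variable {X : Type*} [TopologicalSpace X] {V : X → Type*} [∀ x, NormedAddCommGroup (V x)]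
  [∀ x, NormedSpace ℂ (V x)] [TopologicalSpace (TotalSpace ℂ V)] [FiberBundle ℂ V]
  [VectorBundle ℂ ℂ V]

theorem ContinuousWithinAt.totalSpaceMk_smul {g : X → ℂ} {s : ∀ x, V x} {W : Set X} {x₀ : X}
    (hg : ContinuousWithinAt g W x₀)
    (hs : ContinuousWithinAt (fun x => (TotalSpace.mk x (s x) : TotalSpace ℂ V)) W x₀) :
    ContinuousWithinAt (fun x => (TotalSpace.mk x (g x • s x) : TotalSpace ℂ V)) W x₀ := by
  rw [FiberBundle.continuousWithinAt_section] at hs ⊢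
  have hx₀ := FiberBundle.mem_baseSet_trivializationAt ℂ V x₀
  refine (hg.smul hs).congr_of_eventuallyEq ?_
    (((trivializationAt ℂ V x₀).linear ℂ hx₀).map_smul _ _)
  filter_upwards [nhdsWithin_le_nhds ((trivializationAt ℂ V x₀).open_baseSet.mem_nhds hx₀)]
    with x hx
  exact ((trivializationAt ℂ V x₀).linear ℂ hx).map_smul _ _

theorem continuous_totalSpaceMk_smul_of_tsupport_subset {g : X → ℂ} {s : ∀ x, V x} {W : Set X}
    (hW : IsOpen W) (hg : Continuous g)
    (hs : ContinuousOn (fun x => (TotalSpace.mk x (s x) : TotalSpace ℂ V)) W)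
    (hgW : tsupport g ⊆ W) :
    Continuous fun x => (TotalSpace.mk x (g x • s x) : TotalSpace ℂ V) := by
  refine continuous_iff_continuousAt.2 fun x => ?_
  by_cases hx : x ∈ W
  · exact (hg.continuousWithinAt.totalSpaceMk_smul (hs x hx)).continuousAt (hW.mem_nhds hx)
  · refine (Trivialization.continuousAt_zeroSection ℂ x).congr ?_
    filter_upwards [(isClosed_tsupport g).isOpen_compl.mem_nhds fun h => hx (hgW h)] with y hy
    simp [zeroSection, image_eq_zero_of_notMem_tsupport hy]

namespace Sect

instance : Zero (Sect V) := ⟨⟨fun _ => 0, Trivialization.continuous_zeroSection ℂ⟩⟩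

noncomputable instance : SMul C(X, ℂ) (Sect V) :=
  ⟨fun g ξ => ⟨fun x => g x • ξ.1 x, continuous_iff_continuousAt.2 fun _ =>
    (g.continuous.continuousWithinAt.totalSpaceMk_smul ξ.2.continuousWithinAt).continuousAt
      Filter.univ_mem⟩⟩

@[simp]
theorem smul_val (g : C(X, ℂ)) (ξ : Sect V) (x : X) : (g • ξ).1 x = g x • ξ.1 x := rfl

end Sect

theorem exists_sect_norm_eq_one [R1Space X] [LocallyCompactSpace X] {K W : Set X}
    (hK : IsCompact K) (hW : IsOpen W) (hKW : K ⊆ W) (hV : TrivialOver V W) :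
    ∃ ξ : Sect V, ∀ x ∈ K, ‖ξ.1 x‖ = 1 := by
  obtain ⟨s, hs, hs1⟩ := hV
  obtain ⟨g, hgK, -, hgW, -⟩ := exists_continuousMap_one_of_isCompact_subset_isOpen hK hW hKW
  refine ⟨⟨fun x => (g x : ℂ) • s x, continuous_totalSpaceMk_smul_of_tsupport_subset hW
    (by fun_prop) hs ((tsupport_comp_subset Complex.ofReal_zero g).trans hgW)⟩, fun x hx => ?_⟩
  simp [hgK hx, hs1 x (hKW hx)]

theorem exists_sect_norm_eq_one_on_iterate_image [R1Space X] [LocallyCompactSpace X]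
    (α : X ≃ₜ X) {K U : Set X} (hK : IsCompact K) (hU : IsOpen U) (hKU : K ⊆ U) {N : ℕ}
    (hV : ∀ n < N, TrivialOver V ((⇑α)^[n] '' U)) :
    ∃ ξ : ℕ → Sect V, ∀ n < N, ∀ x ∈ (⇑α)^[n] '' K, ‖(ξ n).1 x‖ = 1 := by
  have hunit (n : ℕ) : ∃ ξ : Sect V, n < N → ∀ x ∈ (⇑α)^[n] '' K, ‖ξ.1 x‖ = 1 := by
    by_cases hn : n < N
    · have hUn : IsOpen ((⇑α)^[n] '' U) := by
        rw [Set.image_eq_preimage_of_inverse (Function.LeftInverse.iterate α.symm_apply_apply n)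
          (Function.RightInverse.iterate α.apply_symm_apply n)]
        exact hU.preimage (α.symm.continuous.iterate n)
      obtain ⟨ξ, hξ⟩ := exists_sect_norm_eq_one (hK.image (α.continuous.iterate n)) hUn
        (Set.image_mono hKU) (hV n hn)
      exact ⟨ξ, fun _ => hξ⟩
    · exact ⟨0, fun h => absurd h hn⟩
  choose ξ hξ using hunit
  exact ⟨ξ, fun n hn => hξ n hn⟩

end Sections

theorem Homeomorph.symm_iterate_apply_iterate {X : Type*} [TopologicalSpace X] (α : X ≃ₜ X)
    (k : ℕ) (x : X) : (⇑α.symm)^[k] ((⇑α)^[k] x) = x :=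
  Function.LeftInverse.iterate α.symm_apply_apply k x

section StarProd

variable {B : Type*} [Monoid B] [StarMul B]

def starProd (d : ℕ → B) (k : ℕ) : B :=
  (List.ofFn fun i : Fin k => star (d i)).prod

@[simp]
theorem starProd_zero (d : ℕ → B) : starProd d 0 = 1 := rfl

theorem starProd_succ (d : ℕ → B) (k : ℕ) :
    starProd d (k + 1) = starProd d k * star (d k) := by
  rw [starProd, List.ofFn_succ', List.concat_eq_append, List.prod_append]
  simp [starProd]

end StarProd

section Representation

variable {X : Type*} [TopologicalSpace X] [CompactSpace X] {α : X ≃ₜ X} {V : X → Type*}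
  [∀ x, NormedAddCommGroup (V x)] [∀ x, InnerProductSpace ℂ (V x)]
  [TopologicalSpace (TotalSpace ℂ V)] [FiberBundle ℂ V] [VectorBundle ℂ ℂ V]
  {B : Type*} [NormedRing B] [StarRing B] [NormedAlgebra ℂ B]
  {p : C(X, ℂ) →⋆ₐ[ℂ] B} {t : Sect V → B}

namespace IsCovRep

theorem t_smul (hrep : IsCovRep α V B p t) (g : C(X, ℂ)) (ξ : Sect V) :
    t (g • ξ) = t ξ * p g :=
  hrep.right_act g ξ _ fun _ => rfl

theorem t_comp_smul (hrep : IsCovRep α V B p t) (g : C(X, ℂ)) (ξ : Sect V) :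
    t (g.comp (α : C(X, X)) • ξ) = p g * t ξ :=
  hrep.left_act g ξ _ fun _ => rfl

theorem star_t_mul_map (hrep : IsCovRep α V B p t) (g : C(X, ℂ)) (ξ : Sect V) :
    star (t ξ) * p g = p (g.comp (α : C(X, X))) * star (t ξ) := by
  have h := congr_arg star ((hrep.t_comp_smul (star g) ξ).symm.trans (hrep.t_smul _ ξ))
  have hg : star ((star g).comp (α : C(X, X))) = g.comp (α : C(X, X)) := by ext; simp
  simpa [← map_star, hg] using h

theorem star_t_mul_t_mul_map (hrep : IsCovRep α V B p t) {ξ : Sect V} {g : C(X, ℂ)}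
    (hξ : ∀ x, g x ≠ 0 → ‖ξ.1 x‖ = 1) : star (t ξ) * t ξ * p g = p g := by
  rw [mul_assoc, ← hrep.t_smul]
  refine hrep.inner_right _ _ _ fun x => ?_
  by_cases hx : g x = 0
  · simp [hx]
  · simp [hξ x hx]

theorem t_mul_star_t_mul_map (hrep : IsCovRep α V B p t) {ξ : Sect V} {g : C(X, ℂ)}
    (hξ : ∀ x, g x ≠ 0 → ‖ξ.1 (α.symm x)‖ = 1) : t ξ * star (t ξ) * p g = p g := by
  have h : star (t ξ) * p g = star (t ((star g).comp (α : C(X, X)) • ξ)) := by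
    rw [hrep.t_comp_smul, star_mul, ← map_star, star_star]
  rw [mul_assoc, h]
  refine hrep.inner_left _ _ _ fun x => ?_
  by_cases hx : g x = 0
  · simp [hx]
  · simp [hξ x hx]

theorem t_mul_map_mul_star_t (hrep : IsCovRep α V B p t) {ξ : Sect V} {g : C(X, ℂ)}
    (hξ : ∀ x, g x ≠ 0 → ‖ξ.1 x‖ = 1) : t ξ * p g * star (t ξ) = p (g.comp (α.symm : C(X, X))) := by
  rw [← hrep.t_smul]
  refine hrep.inner_left _ _ _ fun x => ?_
  by_cases hx : g (α.symm x) = 0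
  · simp [hx]
  · simp [hξ _ hx]

theorem starProd_mul_map (hrep : IsCovRep α V B p t) (ξ : ℕ → Sect V) (k : ℕ)
    {g g' : C(X, ℂ)} (hg : ∀ x, g' x = g ((⇑α)^[k] x)) :
    starProd (t ∘ ξ) k * p g = p g' * starProd (t ∘ ξ) k := by
  induction k generalizing g with
  | zero =>
    rw [starProd_zero, one_mul, mul_one]
    congr 1
    ext x
    simp [hg]
  | succ k ih =>
    rw [starProd_succ, mul_assoc, Function.comp_apply, hrep.star_t_mul_map, ← mul_assoc,
      ih fun x => by simp [hg, Function.iterate_succ_apply'], mul_assoc]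

theorem star_starProd_mul_map (hrep : IsCovRep α V B p t) (ξ : ℕ → Sect V) (k : ℕ)
    {g g' : C(X, ℂ)} (hg : ∀ x, g' x = g ((⇑α.symm)^[k] x)) :
    star (starProd (t ∘ ξ) k) * p g = p g' * star (starProd (t ∘ ξ) k) := by
  have h := congr_arg star
    (hrep.starProd_mul_map ξ k (g := star g') (g' := star g) fun x => by
      simp [hg, Homeomorph.symm_iterate_apply_iterate])
  simpa [← map_star] using h.symm

theorem star_starProd_mul_map_mul_starProd (hrep : IsCovRep α V B p t) (ξ : ℕ → Sect V)
    {g : C(X, ℂ)} (k : ℕ) (hξ : ∀ i < k, ∀ x, g ((⇑α.symm)^[i] x) ≠ 0 → ‖(ξ i).1 x‖ = 1)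
    {g' : C(X, ℂ)} (hg' : ∀ x, g' x = g ((⇑α.symm)^[k] x)) :
    star (starProd (t ∘ ξ) k) * p g * starProd (t ∘ ξ) k = p g' := by
  induction k generalizing g' with
  | zero =>
    rw [starProd_zero, star_one, one_mul, mul_one]
    congr 1
    ext x
    simp [hg']
  | succ k ih =>
    let gk : C(X, ℂ) := g.comp ⟨(⇑α.symm)^[k], α.symm.continuous.iterate k⟩
    calc star (starProd (t ∘ ξ) (k + 1)) * p g * starProd (t ∘ ξ) (k + 1)
        = t (ξ k) * (star (starProd (t ∘ ξ) k) * p g * starProd (t ∘ ξ) k)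
            * star (t (ξ k)) := by
          simp only [starProd_succ, star_mul, star_star, mul_assoc, Function.comp_apply]
      _ = t (ξ k) * p gk * star (t (ξ k)) := by
          rw [ih (g' := gk) (fun i hi => hξ i (by omega)) fun _ => rfl]
      _ = p g' := by
          rw [hrep.t_mul_map_mul_star_t (hξ k k.lt_succ_self)]
          congr 1
          ext x
          simp [gk, hg', Function.iterate_succ_apply]

theorem starProd_mul_star_mul_map (hrep : IsCovRep α V B p t) (ξ : ℕ → Sect V)
    {g : C(X, ℂ)} (k : ℕ) (hξ : ∀ i < k, ∀ x, g ((⇑α.symm)^[i] x) ≠ 0 → ‖(ξ i).1 x‖ = 1) :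
    starProd (t ∘ ξ) k * star (starProd (t ∘ ξ) k) * p g = p g := by
  induction k with
  | zero => simp
  | succ k ih =>
    let gk : C(X, ℂ) := g.comp ⟨(⇑α.symm)^[k], α.symm.continuous.iterate k⟩
    have hcomm := hrep.star_starProd_mul_map ξ k (g := g) (g' := gk) fun _ => rfl
    calc starProd (t ∘ ξ) (k + 1) * star (starProd (t ∘ ξ) (k + 1)) * p g
        = starProd (t ∘ ξ) k * (star (t (ξ k)) * t (ξ k))
            * (star (starProd (t ∘ ξ) k) * p g) := by
          simp only [starProd_succ, star_mul, star_star, mul_assoc, Function.comp_apply]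
      _ = starProd (t ∘ ξ) k * (star (t (ξ k)) * t (ξ k) * p gk)
            * star (starProd (t ∘ ξ) k) := by
          rw [hcomm]
          simp only [mul_assoc]
      _ = starProd (t ∘ ξ) k * star (starProd (t ∘ ξ) k) * p g := by
          rw [hrep.star_t_mul_t_mul_map (hξ k k.lt_succ_self), mul_assoc, ← hcomm, mul_assoc]
      _ = p g := ih fun i hi => hξ i (by omega)

theorem map_mul_star_t_mem_OBalg [StarModule ℂ B] [ContinuousStar B]
    (hrep : IsCovRep α V B p t) {Y : Set X} (ξ : Sect V) {g : C(X, ℂ)}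
    (hg : ∀ x, α x ∈ Y → g x = 0) : p g * star (t ξ) ∈ OBalg α V B p t Y := by
  rw [← star_star (p g), ← star_mul, ← map_star, ← hrep.t_smul]
  refine star_mem (StarSubalgebra.le_topologicalClosure _
    (StarAlgebra.subset_adjoin ℂ _ (Or.inr ⟨_, fun x hx => ?_, rfl⟩)))
  simp [hg x hx]

theorem map_pow_mul_starProd_mem_OBalg [StarModule ℂ B] [ContinuousStar B]
    (hrep : IsCovRep α V B p t) {Y : Set X} (ξ : ℕ → Sect V) {g : C(X, ℂ)} (k : ℕ)
    (hg : ∀ i < k, ∀ x, α x ∈ Y → g ((⇑α.symm)^[i] x) = 0) :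
    p (g ^ k) * starProd (t ∘ ξ) k ∈ OBalg α V B p t Y := by
  induction k with
  | zero => simp
  | succ k ih =>
    let gk : C(X, ℂ) := g.comp ⟨(⇑α.symm)^[k], α.symm.continuous.iterate k⟩
    have hcomm := hrep.starProd_mul_map ξ k (g := gk) (g' := g) fun x => by
      simp [gk, Homeomorph.symm_iterate_apply_iterate]
    have h : p (g ^ (k + 1)) * starProd (t ∘ ξ) (k + 1)
        = p (g ^ k) * starProd (t ∘ ξ) k * (p gk * star (t (ξ k))) := by
      rw [starProd_succ, pow_succ, map_mul, mul_assoc (p (g ^ k)), ← mul_assoc (p g), ← hcomm]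
      simp only [mul_assoc, Function.comp_apply]
    rw [h]
    exact mul_mem (ih fun i hi => hg i (by omega))
      (hrep.map_mul_star_t_mem_OBalg _ (hg k k.lt_succ_self))

end IsCovRep

end Representation

section RealToComplex

variable {X : Type*} [TopologicalSpace X]

@[simp]
theorem toC_apply (f : C(X, ℝ)) (x : X) : toC f x = f x := rfl

theorem star_toC (f : C(X, ℝ)) : star (toC f) = toC f := by
  ext
  simp

theorem exists_pow_eq_toC {f : C(X, ℝ)} (hf : 0 ≤ f) {n : ℕ} (hn : n ≠ 0) :
    ∃ g : C(X, ℂ), g ^ n = toC f ∧ ∀ x, f x = 0 → g x = 0 := by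
  refine ⟨toC ⟨fun x => f x ^ (n⁻¹ : ℝ), by fun_prop (disch := positivity)⟩, ?_, fun x hx => ?_⟩
  · ext x
    simpa [← Complex.ofReal_pow] using Real.rpow_inv_natCast_pow (hf x) hn
  · simp [hx, hn]

end RealToComplex

theorem statement14_general
    (X : Type*) [MetricSpace X] [CompactSpace X]
    (α : X ≃ₜ X)
    (V : X → Type*) [∀ x, NormedAddCommGroup (V x)] [∀ x, InnerProductSpace ℂ (V x)]
    [TopologicalSpace (Bundle.TotalSpace ℂ V)] [FiberBundle ℂ V] [VectorBundle ℂ ℂ V]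
    (B : Type*) [NormedRing B] [StarRing B] [NormedAlgebra ℂ B]
    [StarModule ℂ B] [ContinuousStar B]
    (p : C(X, ℂ) →⋆ₐ[ℂ] B) (t : Sect V → B)
    (hrep : IsCovRep α V B p t)
    (Y : Set X)
    (N : ℕ) (hN : 1 ≤ N)
    (U : Set X) (hUopen : IsOpen U)
    -- 𝒱|_{αⁿ(U)} is trivial for 0 ≤ n ≤ N−1
    (htriv : ∀ n < N, TrivialOver V ((⇑α)^[n] '' U))
    -- f ≥ 0, supported in U, vanishing on ∪_{n=1}^N α^{-n}(Y)
    (f : C(X, ℝ)) (hf0 : 0 ≤ f) (hsupp : tsupport ⇑f ⊆ U)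
    (hvan : ∀ n, 1 ≤ n → n ≤ N → ∀ y ∈ Y, f ((⇑α.symm)^[n] y) = 0) :
    ∃ ξs : Fin N → Sect V,
      -- the local units: ξ_n*ξ_n (f∘α^{-(n-1)}) = f∘α^{-(n-1)},
      --                  ξ_nξ_n* (f∘α^{-n})     = f∘α^{-n}
      (∀ i : Fin N,
        star (t (ξs i)) * t (ξs i)
            * p ((toC f).comp ⟨(⇑α.symm)^[(i : ℕ)], α.symm.continuous.iterate _⟩)
          = p ((toC f).comp ⟨(⇑α.symm)^[(i : ℕ)], α.symm.continuous.iterate _⟩) ∧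
        t (ξs i) * star (t (ξs i))
            * p ((toC f).comp ⟨(⇑α.symm)^[(i : ℕ) + 1], α.symm.continuous.iterate _⟩)
          = p ((toC f).comp ⟨(⇑α.symm)^[(i : ℕ) + 1], α.symm.continuous.iterate _⟩)) ∧
      -- and a = f^{1/2} ξ_1* ⋯ ξ_N* ∈ O(ℰ_Y) satisfies aa* = f and a*a = f∘α^{-N}
      (∀ a : B,
        a = p (toC ⟨fun x => Real.sqrt (f x), Real.continuous_sqrt.comp f.continuous⟩)
              * (List.ofFn fun i : Fin N => star (t (ξs i))).prod →
        a ∈ OBalg α V B p t Y ∧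
        a * star a = p (toC f) ∧
        star a * a = p ((toC f).comp ⟨(⇑α.symm)^[N], α.symm.continuous.iterate _⟩)) := by
  obtain ⟨ξ, hξ⟩ := exists_sect_norm_eq_one_on_iterate_image α
    (isClosed_tsupport f).isCompact hUopen hsupp htriv
  have hlocal : ∀ g : C(X, ℂ), (∀ x, g x ≠ 0 → f x ≠ 0) →
      ∀ i < N, ∀ x, g ((⇑α.symm)^[i] x) ≠ 0 → ‖(ξ i).1 x‖ = 1 :=
    fun g hg i hi x hx => hξ i hi x
      ⟨_, subset_tsupport f (hg _ hx), Function.RightInverse.iterate α.apply_symm_apply i x⟩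
  have hfC : ∀ x, toC f x ≠ 0 → f x ≠ 0 := fun x hx h => hx (by simp [h])
  set s : C(X, ℝ) := ⟨fun x => Real.sqrt (f x), Real.continuous_sqrt.comp f.continuous⟩
  obtain ⟨r, hr, hr0⟩ :=
    exists_pow_eq_toC (f := s) (fun x => Real.sqrt_nonneg _) (n := N) (by omega)
  refine ⟨fun i => ξ i, fun i => ⟨?_, ?_⟩, ?_⟩
  · exact hrep.star_t_mul_t_mul_map (hlocal (toC f) hfC i i.2)
  · exact hrep.t_mul_star_t_mul_map fun x => hlocal (toC f) hfC i i.2 (α.symm x)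
  intro a ha
  replace ha : a = p (toC s) * starProd (t ∘ ξ) N := ha
  subst ha
  have hs : star (p (toC s)) = p (toC s) := by rw [← map_star, star_toC]
  have hss : p (toC s) * p (toC s) = p (toC f) := by
    rw [← map_mul]
    congr 1
    ext x
    simpa [s, ← Complex.ofReal_mul] using Real.mul_self_sqrt (hf0 x)
  refine ⟨?_, ?_, ?_⟩
  · rw [← hr]
    refine hrep.map_pow_mul_starProd_mem_OBalg ξ N fun i hi x hx => hr0 _ ?_
    have hfx := hvan (i + 1) (by omega) hi (α x) hx
    simp only [Function.iterate_succ_apply, α.symm_apply_apply] at hfx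
    simp [s, hfx]
  · rw [star_mul, hs, ← mul_assoc, mul_assoc _ _ (star _), mul_assoc,
      hrep.starProd_mul_star_mul_map ξ N (hlocal (toC s) fun x hx h => hx (by simp [s, h])), hss]
  · rw [star_mul, hs, ← mul_assoc, mul_assoc (star _) (p (toC s)) (p (toC s)), hss]
    exact hrep.star_starProd_mul_map_mul_starProd ξ N
      (hlocal (toC f) hfC) fun _ => rfl

theorem statement14
    (X : Type*) [MetricSpace X] [CompactSpace X]
    (α : X ≃ₜ X)
    (V : X → Type*) [∀ x, NormedAddCommGroup (V x)] [∀ x, InnerProductSpace ℂ (V x)]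
    [TopologicalSpace (Bundle.TotalSpace ℂ V)] [FiberBundle ℂ V] [VectorBundle ℂ ℂ V]
    (B : Type*) [NormedRing B] [StarRing B] [CStarRing B] [NormedAlgebra ℂ B]
    [StarModule ℂ B] [ContinuousStar B] [CompleteSpace B]
    (p : C(X, ℂ) →⋆ₐ[ℂ] B) (t : Sect V → B)
    (hrep : IsCovRep α V B p t)
    (Y : Set X) (hYne : Y.Nonempty) (hYcl : IsClosed Y)
    (N : ℕ) (hN : 1 ≤ N)
    (U : Set X) (hUopen : IsOpen U)
    -- 𝒱|_{αⁿ(U)} is trivial for 0 ≤ n ≤ N−1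
    (htriv : ∀ n < N, TrivialOver V ((⇑α)^[n] '' U))
    -- f ≥ 0, supported in U, vanishing on ∪_{n=1}^N α^{-n}(Y)
    (f : C(X, ℝ)) (hf0 : 0 ≤ f) (hsupp : tsupport ⇑f ⊆ U)
    (hvan : ∀ n, 1 ≤ n → n ≤ N → ∀ y ∈ Y, f ((⇑α.symm)^[n] y) = 0) :
    ∃ ξs : Fin N → Sect V,
      -- the local units: ξ_n*ξ_n (f∘α^{-(n-1)}) = f∘α^{-(n-1)},
      --                  ξ_nξ_n* (f∘α^{-n})     = f∘α^{-n}
      (∀ i : Fin N,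
        star (t (ξs i)) * t (ξs i)
            * p ((toC f).comp ⟨(⇑α.symm)^[(i : ℕ)], α.symm.continuous.iterate _⟩)
          = p ((toC f).comp ⟨(⇑α.symm)^[(i : ℕ)], α.symm.continuous.iterate _⟩) ∧
        t (ξs i) * star (t (ξs i))
            * p ((toC f).comp ⟨(⇑α.symm)^[(i : ℕ) + 1], α.symm.continuous.iterate _⟩)
          = p ((toC f).comp ⟨(⇑α.symm)^[(i : ℕ) + 1], α.symm.continuous.iterate _⟩)) ∧
      -- and a = f^{1/2} ξ_1* ⋯ ξ_N* ∈ O(ℰ_Y) satisfies aa* = f and a*a = f∘α^{-N}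
      (∀ a : B,
        a = p (toC ⟨fun x => Real.sqrt (f x), Real.continuous_sqrt.comp f.continuous⟩)
              * (List.ofFn fun i : Fin N => star (t (ξs i))).prod →
        a ∈ OBalg α V B p t Y ∧
        a * star a = p (toC f) ∧
        star a * a = p ((toC f).comp ⟨(⇑α.symm)^[N], α.symm.continuous.iterate _⟩)) :=
  statement14_general X α V B p t hrep Y N hN U hUopen htriv f hf0 hsupp hvan
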